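/- arXiv:1207.1479 — 2 statements merged into one kernel-verified Lean document; each statement's English description precedes it below -/
import Mathlib

section
/- For any k ≤ n, the map Φ : M_n → M_n defined by Φ(X) = k·Tr(X)·I − X is k-positive; and if k < n, Φ is not (k+1)-positive. -/
open scoped BigOperators ComplexOrder

noncomputable section

/-- The ampliation `id_k ⊗ Φ` of a map `Φ : M_m → M_n`, acting on `M_k ⊗ M_m`. -/
def ampliate (k : ℕ) {m n : ℕ} (Φ : Matrix (Fin m) (Fin m) ℂ → Matrix (Fin n) (Fin n) ℂ)
    (X : Matrix (Fin k × Fin m) (Fin k × Fin m) ℂ) : Matrix (Fin k × Fin n) (Fin k × Fin n) ℂ :=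
  Matrix.of fun p q => Φ (Matrix.of fun a b => X (p.1, a) (q.1, b)) p.2 q.2

/-- `Φ` is `k`-positive if `id_k ⊗ Φ` maps positive semidefinite matrices to positive
semidefinite matrices. -/
def kPositive (k : ℕ) {m n : ℕ} (Φ : Matrix (Fin m) (Fin m) ℂ → Matrix (Fin n) (Fin n) ℂ) :
    Prop :=
  ∀ X : Matrix (Fin k × Fin m) (Fin k × Fin m) ℂ, X.PosSemidef → (ampliate k Φ X).PosSemidef

/-- `Φ` is completely positive if it is `k`-positive for all `k`. -/
def CompletelyPositive {m n : ℕ} (Φ : Matrix (Fin m) (Fin m) ℂ → Matrix (Fin n) (Fin n) ℂ) :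
    Prop :=
  ∀ k : ℕ, kPositive k Φ

/-- The Choi matrix `C_Φ = Σ_{i,j} |i⟩⟨j| ⊗ Φ(|i⟩⟨j|)` of `Φ : M_m → M_n`. -/
def choi {m n : ℕ} (Φ : Matrix (Fin m) (Fin m) ℂ → Matrix (Fin n) (Fin n) ℂ) :
    Matrix (Fin m × Fin n) (Fin m × Fin n) ℂ :=
  Matrix.of fun p q => Φ (Matrix.single p.1 q.1 (1 : ℂ)) p.2 q.2

/-!
For a rank-one `X = v v*` with `v = Σ_{a,i} V a i • e_a ⊗ e_i`, the ampliation of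
`Φ(X) = k·Tr(X)·I − X` is `k·(V V*) ⊗ I − v v*`, whose quadratic form at `w` (with matrix `W`)
is `k‖M‖₂² − |Tr M|²` for `M = W* V`. Since `M` factors through `ℂᵏ` it has rank at most `k`,
and `|Tr M|² ≤ rank M · ‖M‖₂²` by Cauchy–Schwarz over an orthonormal basis of the range of `M`.
Positive semidefinite matrices are sums of rank-one ones, which gives `k`-positivity.
For `k < n`, taking `v = w = Σ_{a ≤ k} e_a ⊗ e_a` makes `M` a projection of rank `k + 1`, and
the form equals `k(k + 1) − (k + 1)² < 0`.
-/

open Matrix Module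
open scoped InnerProductSpace Kronecker

namespace LinearMap

variable {𝕜 E ι κ : Type*} [RCLike 𝕜] [Fintype ι] [Fintype κ] [NormedAddCommGroup E]
  [InnerProductSpace 𝕜 E] [FiniteDimensional 𝕜 E]

lemma trace_eq_sum_inner_range (T : E →ₗ[𝕜] E) (f : OrthonormalBasis κ 𝕜 (range T)) :
    T.trace 𝕜 E = ∑ t, ⟪(f t : E), T (f t)⟫_𝕜 := by
  calc T.trace 𝕜 E = trace 𝕜 E ((range T).subtype ∘ₗ T.rangeRestrict) := rfl
    _ = _ := by rw [trace_comp_comm', trace_eq_sum_inner _ f]; rfl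

lemma sum_sq_norm_adjoint_apply (T : E →ₗ[𝕜] E) (f : OrthonormalBasis κ 𝕜 (range T))
    (b : OrthonormalBasis ι 𝕜 E) :
    ∑ t, ‖adjoint T (f t)‖ ^ 2 = ∑ i, ‖T (b i)‖ ^ 2 := by
  calc ∑ t, ‖adjoint T (f t)‖ ^ 2 = ∑ t, ∑ i, ‖⟪(f t : E), T (b i)⟫_𝕜‖ ^ 2 := by
        refine Finset.sum_congr rfl fun t _ => ?_
        rw [← b.sum_sq_norm_inner_left]
        simp_rw [adjoint_inner_left]
    _ = ∑ i, ‖T (b i)‖ ^ 2 := by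
        rw [Finset.sum_comm]
        refine Finset.sum_congr rfl fun i _ => ?_
        simpa using f.sum_sq_norm_inner_right (T.rangeRestrict (b i))

/-- Each term of `Tr T = Σ_t ⟪f_t, T f_t⟫` is bounded by `‖T† f_t‖`, and these squares sum to
the Hilbert–Schmidt norm of `T`. -/
theorem norm_trace_sq_le (T : E →ₗ[𝕜] E) (b : OrthonormalBasis ι 𝕜 E) :
    ‖T.trace 𝕜 E‖ ^ 2 ≤ finrank 𝕜 (range T) * ∑ i, ‖T (b i)‖ ^ 2 := by
  set f := stdOrthonormalBasis 𝕜 (range T)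
  calc ‖T.trace 𝕜 E‖ ^ 2 ≤ (∑ t, ‖⟪(f t : E), T (f t)⟫_𝕜‖) ^ 2 := by
        rw [trace_eq_sum_inner_range T f]
        gcongr
        exact norm_sum_le _ _
    _ ≤ finrank 𝕜 (range T) * ∑ t, ‖⟪(f t : E), T (f t)⟫_𝕜‖ ^ 2 := by
        simpa using sq_sum_le_card_mul_sum_sq (s := Finset.univ)
          (f := fun t => ‖⟪(f t : E), T (f t)⟫_𝕜‖)
    _ ≤ finrank 𝕜 (range T) * ∑ t, ‖adjoint T (f t)‖ ^ 2 := by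
        gcongr with t
        rw [← adjoint_inner_left]
        calc ‖⟪adjoint T (f t), (f t : E)⟫_𝕜‖ ≤ ‖adjoint T (f t)‖ * ‖(f t : E)‖ :=
              norm_inner_le_norm _ _
          _ = ‖adjoint T (f t)‖ := by rw [← Submodule.coe_norm, f.orthonormal.1 t, mul_one]
    _ = finrank 𝕜 (range T) * ∑ i, ‖T (b i)‖ ^ 2 := by rw [sum_sq_norm_adjoint_apply T f b]

end LinearMap

namespace Matrix

variable {𝕜 m n : Type*} [RCLike 𝕜] [Fintype m] [Fintype n]

theorem norm_trace_sq_le_rank_mul [DecidableEq m] (A : Matrix m m 𝕜) :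
    ‖A.trace‖ ^ 2 ≤ A.rank * ∑ i, ∑ j, ‖A i j‖ ^ 2 := by
  let b := EuclideanSpace.basisFun m 𝕜
  have htrace : (toEuclideanLin A).trace 𝕜 _ = A.trace := by
    rw [toEuclideanLin_eq_toLin_orthonormal, LinearMap.trace_eq_matrix_trace 𝕜 b.toBasis,
      LinearMap.toMatrix_toLin]
  have hrank : finrank 𝕜 (LinearMap.range (toEuclideanLin A)) = A.rank :=
    (A.rank_eq_finrank_range_toLin b.toBasis b.toBasis).symm
  have hcol (j : m) : ‖toEuclideanLin A (b j)‖ ^ 2 = ∑ i, ‖A i j‖ ^ 2 := by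
    simp [b, EuclideanSpace.norm_sq_eq, mulVec, dotProduct, Pi.single_apply]
  have := (toEuclideanLin A).norm_trace_sq_le b
  simp only [htrace, hrank, hcol] at this
  rwa [Finset.sum_comm] at this

theorem trace_mul_conjTranspose_self (A : Matrix m n 𝕜) :
    (A * Aᴴ).trace = ∑ i, ∑ j, ((‖A i j‖ ^ 2 : ℝ) : 𝕜) := by
  simp [trace, mul_apply, RCLike.mul_conj]

/-- Over `ℂ` a nonnegative quadratic form forces the matrix to be Hermitian. -/
theorem posSemidef_of_forall_dotProduct_mulVec_nonneg [DecidableEq n] {M : Matrix n n ℂ}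
    (h : ∀ x, 0 ≤ star x ⬝ᵥ (M *ᵥ x)) : M.PosSemidef := by
  rw [← isPositive_toEuclideanLin_iff, LinearMap.isPositive_iff_complex]
  intro x
  obtain ⟨r, hr, hx⟩ := RCLike.nonneg_iff_exists_ofReal.mp (h x.ofLp)
  rw [← inner_conj_symm, EuclideanSpace.inner_eq_star_dotProduct, dotProduct_comm]
  simp [← hx, hr]

variable {R : Type*} [CommSemiring R] [StarRing R]

theorem star_uncurry_dotProduct_uncurry (V W : Matrix m n R) :
    star (Function.uncurry W) ⬝ᵥ Function.uncurry V = (Wᴴ * V).trace := by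
  simp only [dotProduct, trace, diag, mul_apply, Fintype.sum_prod_type, Function.uncurry,
    Pi.star_apply, conjTranspose_apply]
  exact Finset.sum_comm

theorem star_uncurry_dotProduct_kronecker_one_mulVec [DecidableEq n] (A : Matrix m m R)
    (W : Matrix m n R) :
    star (Function.uncurry W) ⬝ᵥ (A ⊗ₖ (1 : Matrix n n R)) *ᵥ Function.uncurry W =
      (Wᴴ * A * W).trace := by
  simp only [dotProduct, Pi.star_apply, Function.uncurry, mulVec, kroneckerMap_apply, one_apply,
    mul_ite, mul_one, mul_zero, ite_mul, zero_mul, Fintype.sum_prod_type, Finset.sum_ite_eq,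
    Finset.mem_univ, if_true, Finset.mul_sum, trace, diag_apply, mul_apply, conjTranspose_apply,
    Finset.sum_mul, mul_assoc]
  rw [Finset.sum_comm]
  exact Finset.sum_congr rfl fun _ _ => Finset.sum_comm

end Matrix

section Ampliation

variable {k m n : ℕ} {F : Type*} [FunLike F (Matrix (Fin m) (Fin m) ℂ) (Matrix (Fin n) (Fin n) ℂ)]
  [AddMonoidHomClass F (Matrix (Fin m) (Fin m) ℂ) (Matrix (Fin n) (Fin n) ℂ)]

lemma ampliate_sum {ι : Type*} (Φ : F) (s : Finset ι)
    (X : ι → Matrix (Fin k × Fin m) (Fin k × Fin m) ℂ) :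
    ampliate k Φ (∑ r ∈ s, X r) = ∑ r ∈ s, ampliate k Φ (X r) := by
  ext p q
  have hblock : (of fun a b => ∑ r ∈ s, X r (p.1, a) (q.1, b)) =
      ∑ r ∈ s, of fun a b => X r (p.1, a) (q.1, b) := by
    ext; simp [Matrix.sum_apply]
  simp [ampliate, hblock, Matrix.sum_apply]

lemma kPositive_of_forall_vecMulVec (Φ : F)
    (h : ∀ v, (ampliate k Φ (vecMulVec v (star v))).PosSemidef) : kPositive k Φ := by
  intro X hX
  obtain ⟨r, v, rfl⟩ := posSemidef_iff_eq_sum_vecMulVec.mp hX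
  rw [ampliate_sum]
  exact posSemidef_sum _ fun i _ => h (v i)

end Ampliation

def reductionMap (k n : ℕ) : Matrix (Fin n) (Fin n) ℂ →ₗ[ℂ] Matrix (Fin n) (Fin n) ℂ where
  toFun X := ((k : ℂ) * X.trace) • 1 - X
  map_add' X Y := by simp only [trace_add, mul_add, add_smul]; abel
  map_smul' c X := by
    simp only [trace_smul, smul_sub, smul_smul, smul_eq_mul, RingHom.id_apply]; ring_nf

lemma ampliate_reductionMap_vecMulVec (K k n : ℕ) (V : Matrix (Fin K) (Fin n) ℂ) :
    ampliate K (reductionMap k n) (vecMulVec (Function.uncurry V) (star (Function.uncurry V))) =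
      (k : ℂ) • ((V * Vᴴ) ⊗ₖ (1 : Matrix (Fin n) (Fin n) ℂ)) -
        vecMulVec (Function.uncurry V) (star (Function.uncurry V)) := by
  ext ⟨a, i⟩ ⟨b, j⟩
  simp [ampliate, reductionMap, trace, mul_apply, vecMulVec_apply, one_apply, Function.uncurry]

lemma star_dotProduct_ampliate_reductionMap_mulVec (K k n : ℕ) (V W : Matrix (Fin K) (Fin n) ℂ) :
    star (Function.uncurry W) ⬝ᵥ
        ampliate K (reductionMap k n) (vecMulVec (Function.uncurry V) (star (Function.uncurry V)))
          *ᵥ Function.uncurry W =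
      k * (Wᴴ * V * (Wᴴ * V)ᴴ).trace - (Wᴴ * V).trace * star (Wᴴ * V).trace := by
  have hVW : star (Function.uncurry V) ⬝ᵥ Function.uncurry W = star (Wᴴ * V).trace := by
    rw [← trace_conjTranspose, conjTranspose_mul, conjTranspose_conjTranspose,
      star_uncurry_dotProduct_uncurry]
  rw [ampliate_reductionMap_vecMulVec, sub_mulVec, dotProduct_sub, smul_mulVec, dotProduct_smul,
    star_uncurry_dotProduct_kronecker_one_mulVec, vecMulVec_mulVec, op_smul_eq_smul,
    dotProduct_smul, hVW, star_uncurry_dotProduct_uncurry, smul_eq_mul, smul_eq_mul,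
    conjTranspose_mul, conjTranspose_conjTranspose]
  simp only [Matrix.mul_assoc]
  ring

theorem kPositive_reductionMap (k n : ℕ) : kPositive k (reductionMap k n) := by
  refine kPositive_of_forall_vecMulVec _ fun v =>
    posSemidef_of_forall_dotProduct_mulVec_nonneg fun w => ?_
  obtain ⟨V, rfl⟩ : ∃ V : Matrix (Fin k) (Fin n) ℂ, Function.uncurry V = v :=
    ⟨Function.curry v, Function.uncurry_curry v⟩
  obtain ⟨W, rfl⟩ : ∃ W : Matrix (Fin k) (Fin n) ℂ, Function.uncurry W = w :=
    ⟨Function.curry w, Function.uncurry_curry w⟩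
  rw [star_dotProduct_ampliate_reductionMap_mulVec]
  set M := Wᴴ * V
  have hrank : M.rank ≤ k := (rank_mul_le_left _ _).trans (rank_le_width _)
  have hnorm : M.trace * star M.trace = ((‖M.trace‖ ^ 2 : ℝ) : ℂ) := by
    rw [RCLike.star_def, RCLike.mul_conj]; push_cast; rfl
  rw [trace_mul_conjTranspose_self, hnorm]
  have key : ‖M.trace‖ ^ 2 ≤ k * ∑ i, ∑ j, ‖M i j‖ ^ 2 :=
    (norm_trace_sq_le_rank_mul M).trans (by gcongr)
  exact (Complex.zero_le_real.mpr (sub_nonneg.mpr key)).trans_eq (by push_cast; rfl)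

theorem not_kPositive_succ_reductionMap {k n : ℕ} (h : k < n) :
    ¬ kPositive (k + 1) (reductionMap k n) := by
  intro hk
  -- `Function.uncurry E = Σ_{a ≤ k} e_a ⊗ e_a`
  set E : Matrix (Fin (k + 1)) (Fin n) ℂ :=
    (1 : Matrix (Fin n) (Fin n) ℂ).submatrix (Fin.castLE h) id
  have hE : E * Eᴴ = 1 := by
    rw [conjTranspose_submatrix, conjTranspose_one, ← submatrix_mul _ _ _ _ _ Function.bijective_id,
      Matrix.mul_one, submatrix_one _ (Fin.castLE_injective h)]
  have htrace : (Eᴴ * E).trace = k + 1 := by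
    rw [trace_mul_comm, hE, trace_one, Fintype.card_fin]; push_cast; rfl
  have hsq : Eᴴ * E * (Eᴴ * E)ᴴ = Eᴴ * E := by
    rw [conjTranspose_mul, conjTranspose_conjTranspose, Matrix.mul_assoc, ← Matrix.mul_assoc E, hE,
      Matrix.one_mul]
  have hform :=
    (hk _ (posSemidef_vecMulVec_self_star (Function.uncurry E))).dotProduct_mulVec_nonneg
      (Function.uncurry E)
  rw [star_dotProduct_ampliate_reductionMap_mulVec, hsq, htrace] at hform
  have hneg : (k : ℂ) * (k + 1) - (k + 1) * star ((k : ℂ) + 1) = ((-(k + 1) : ℝ) : ℂ) := by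
    rw [star_add, star_natCast, star_one]; push_cast; ring
  rw [hneg, Complex.zero_le_real] at hform
  linarith

theorem reduction_type_map_k_positive_general (n k : ℕ) :
    kPositive k (fun X : Matrix (Fin n) (Fin n) ℂ =>
      ((k : ℂ) * X.trace) • (1 : Matrix (Fin n) (Fin n) ℂ) - X) ∧
    (k < n → ¬ kPositive (k + 1) (fun X : Matrix (Fin n) (Fin n) ℂ =>
      ((k : ℂ) * X.trace) • (1 : Matrix (Fin n) (Fin n) ℂ) - X)) :=
  ⟨kPositive_reductionMap k n, not_kPositive_succ_reductionMap⟩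

/-- For any `k ≤ n`, the map `Φ(X) = k·Tr(X)·I − X` on `M_n` is `k`-positive;
and if `k < n`, then `Φ` is not `(k+1)`-positive. -/
theorem reduction_type_map_k_positive (n k : ℕ) (hk : k ≤ n) :
    kPositive k (fun X : Matrix (Fin n) (Fin n) ℂ =>
      ((k : ℂ) * X.trace) • (1 : Matrix (Fin n) (Fin n) ℂ) - X) ∧
    (k < n → ¬ kPositive (k + 1) (fun X : Matrix (Fin n) (Fin n) ℂ =>
      ((k : ℂ) * X.trace) • (1 : Matrix (Fin n) (Fin n) ℂ) - X)) :=
  reduction_type_map_k_positive_general n k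
end
end

section
/- Let X ∈ M_m ⊗ M_n be positive semidefinite and let c ∈ R. Then cI − X is k-block positive if and only if c ≥ ‖X‖_{S(k)}. -/
open scoped BigOperators

noncomputable section

/-- Elementary tensor of two vectors. -/
def tens {m n : ℕ} (a : Fin m → ℂ) (b : Fin n → ℂ) : Fin m × Fin n → ℂ :=
  fun p => a p.1 * b p.2

/-- Inner product `⟨w|v⟩`, conjugate-linear in the first argument. -/
def ip {ι : Type} [Fintype ι] (w v : ι → ℂ) : ℂ :=
  ∑ i, (starRingEnd ℂ) (w i) * v i

/-- Euclidean norm. -/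
def nrm {ι : Type} [Fintype ι] (v : ι → ℂ) : ℝ :=
  Real.sqrt (∑ i, Complex.normSq (v i))

/-- Schmidt rank at most `k`: `v` is a sum of `k` elementary tensors. -/
def SRle {m n : ℕ} (k : ℕ) (v : Fin m × Fin n → ℂ) : Prop :=
  ∃ (a : Fin k → Fin m → ℂ) (b : Fin k → Fin n → ℂ),
    v = fun p => ∑ l, a l p.1 * b l p.2

/-- The `s(k)`-vector norm. -/
def snorm {m n : ℕ} (k : ℕ) (v : Fin m × Fin n → ℂ) : ℝ :=
  sSup { r : ℝ | ∃ w : Fin m × Fin n → ℂ, nrm w = 1 ∧ SRle k w ∧ r = ‖ip w v‖ }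

/-- The `S(k)`-operator norm. -/
def Snorm {m n : ℕ} (k : ℕ) (X : Matrix (Fin m × Fin n) (Fin m × Fin n) ℂ) : ℝ :=
  sSup { r : ℝ | ∃ v w : Fin m × Fin n → ℂ, nrm v = 1 ∧ nrm w = 1 ∧ SRle k v ∧ SRle k w ∧
    r = ‖ip w (X.mulVec v)‖ }

/-- `k`-block positivity: `⟨v|X|v⟩ ≥ 0` for all unit vectors of Schmidt rank at most `k`. -/
def kBlockPos {m n : ℕ} (k : ℕ) (X : Matrix (Fin m × Fin n) (Fin m × Fin n) ℂ) : Prop :=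
  ∀ v : Fin m × Fin n → ℂ, nrm v = 1 → SRle k v → 0 ≤ (ip v (X.mulVec v)).re

/-!
Write `X = BᴴB`. For a unit vector `v`, `⟨v|(cI - X)v⟩ = c - ‖Bv‖²`, so `k`-block positivity of
`cI - X` says exactly that `‖Bv‖² ≤ c` for unit `v` of Schmidt rank at most `k`. By Cauchy–Schwarz,
`|⟨w|Xv⟩| = |⟨Bw|Bv⟩| ≤ ‖Bw‖ ‖Bv‖ ≤ c` for such `v, w`, which bounds `‖X‖_{S(k)}`; conversely
`⟨v|Xv⟩ ≤ ‖X‖_{S(k)}` directly from the definition of the supremum.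
-/

open Matrix
open scoped ComplexOrder

section InnerProduct

variable {ι : Type} [Fintype ι]

lemma ip_eq_inner (w v : ι → ℂ) : ip w v = inner ℂ (WithLp.toLp 2 w) (WithLp.toLp 2 v) := by
  simp [ip, EuclideanSpace.inner_toLp_toLp, dotProduct, mul_comm]

lemma nrm_eq_norm (v : ι → ℂ) : nrm v = ‖WithLp.toLp 2 v‖ := by
  simp [nrm, EuclideanSpace.norm_eq, Complex.normSq_eq_norm_sq]

lemma nrm_nonneg (v : ι → ℂ) : 0 ≤ nrm v := Real.sqrt_nonneg _

lemma nrm_single [DecidableEq ι] (i : ι) : nrm (Pi.single i (1 : ℂ)) = 1 := by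
  simp [nrm, Pi.single_apply, apply_ite]

lemma norm_ip_le (w v : ι → ℂ) : ‖ip w v‖ ≤ nrm w * nrm v := by
  rw [ip_eq_inner, nrm_eq_norm, nrm_eq_norm]
  exact norm_inner_le_norm _ _

lemma ip_self (v : ι → ℂ) : ip v v = (nrm v ^ 2 : ℝ) := by
  rw [ip_eq_inner, nrm_eq_norm, inner_self_eq_norm_sq_to_K]
  push_cast; rfl

lemma ip_conjTranspose_mul_mulVec (B : Matrix ι ι ℂ) (w v : ι → ℂ) :
    ip w ((Bᴴ * B) *ᵥ v) = ip (B *ᵥ w) (B *ᵥ v) := by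
  simp only [ip_eq_inner, EuclideanSpace.inner_toLp_toLp, ← mulVec_mulVec, star_mulVec]
  rw [dotProduct_comm, dotProduct_mulVec, dotProduct_comm]

lemma re_ip_smul_one_sub_mulVec [DecidableEq ι] {v : ι → ℂ} (hv : nrm v = 1) (c : ℝ)
    (X : Matrix ι ι ℂ) : (ip v (((c : ℂ) • 1 - X) *ᵥ v)).re = c - (ip v (X *ᵥ v)).re := by
  have hvv : ip v v = 1 := by rw [ip_self, hv]; norm_num
  rw [sub_mulVec, smul_mulVec, one_mulVec]
  simp only [ip_eq_inner, WithLp.toLp_sub, WithLp.toLp_smul, inner_sub_right, inner_smul_right]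
  rw [← ip_eq_inner, hvv]
  simp

lemma norm_ip_mulVec_le_opNorm [DecidableEq ι] (A : Matrix ι ι ℂ) (w v : ι → ℂ) :
    ‖ip w (A *ᵥ v)‖ ≤ ‖toEuclideanCLM (𝕜 := ℂ) A‖ * nrm w * nrm v := by
  calc ‖ip w (A *ᵥ v)‖ ≤ nrm w * nrm (A *ᵥ v) := norm_ip_le _ _
    _ ≤ nrm w * (‖toEuclideanCLM (𝕜 := ℂ) A‖ * nrm v) := by
      simp only [nrm_eq_norm, ← toEuclideanCLM_toLp]
      gcongr
      exact (toEuclideanCLM (𝕜 := ℂ) A).le_opNorm _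
    _ = _ := by ring

lemma Matrix.PosSemidef.re_ip_mulVec_nonneg {X : Matrix ι ι ℂ} (hX : X.PosSemidef) (v : ι → ℂ) :
    0 ≤ (ip v (X *ᵥ v)).re :=
  (Complex.nonneg_iff.mp (hX.dotProduct_mulVec_nonneg v)).1

open scoped MatrixOrder in
lemma Matrix.PosSemidef.norm_ip_mulVec_le {X : Matrix ι ι ℂ} (hX : X.PosSemidef) (w v : ι → ℂ) :
    ‖ip w (X *ᵥ v)‖ ≤ √(ip w (X *ᵥ w)).re * √(ip v (X *ᵥ v)).re := by
  classical
  obtain ⟨B, rfl⟩ := CStarAlgebra.nonneg_iff_eq_star_mul_self.mp hX.nonneg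
  simp only [star_eq_conjTranspose, ip_conjTranspose_mul_mulVec, ip_self, Complex.ofReal_re,
    Real.sqrt_sq (nrm_nonneg _)]
  exact norm_ip_le _ _

end InnerProduct

section SchmidtRank

variable {m n k : ℕ}

lemma SRle_tens (hk : 1 ≤ k) (a : Fin m → ℂ) (b : Fin n → ℂ) : SRle k (tens a b) := by
  let l₀ : Fin k := ⟨0, hk⟩
  refine ⟨fun l i => if l = l₀ then a i else 0, fun _ => b, ?_⟩
  funext p
  simp [tens, ite_mul]

lemma nrm_tens (a : Fin m → ℂ) (b : Fin n → ℂ) : nrm (tens a b) = nrm a * nrm b := by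
  rw [nrm, nrm, nrm, ← Real.sqrt_mul (Finset.sum_nonneg fun _ _ => Complex.normSq_nonneg _),
    Finset.sum_mul_sum, ← Finset.univ_product_univ, Finset.sum_product]
  simp [tens]

lemma exists_nrm_eq_one_SRle (hm : 0 < m) (hn : 0 < n) (hk : 1 ≤ k) :
    ∃ v : Fin m × Fin n → ℂ, nrm v = 1 ∧ SRle k v :=
  ⟨tens (Pi.single ⟨0, hm⟩ 1) (Pi.single ⟨0, hn⟩ 1),
    by rw [nrm_tens, nrm_single, nrm_single, one_mul], SRle_tens hk _ _⟩

lemma kBlockPos_smul_one_sub_iff (X : Matrix (Fin m × Fin n) (Fin m × Fin n) ℂ) (c : ℝ) :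
    kBlockPos k ((c : ℂ) • 1 - X) ↔
      ∀ v, nrm v = 1 → SRle k v → (ip v (X *ᵥ v)).re ≤ c := by
  refine forall₃_congr fun v hv _ => ?_
  rw [re_ip_smul_one_sub_mulVec hv, sub_nonneg]

lemma norm_ip_mulVec_le_Snorm (X : Matrix (Fin m × Fin n) (Fin m × Fin n) ℂ)
    {v w : Fin m × Fin n → ℂ} (hv : nrm v = 1) (hw : nrm w = 1) (hsv : SRle k v) (hsw : SRle k w) :
    ‖ip w (X *ᵥ v)‖ ≤ Snorm k X := by
  refine le_csSup ⟨‖toEuclideanCLM (𝕜 := ℂ) X‖, ?_⟩ ⟨v, w, hv, hw, hsv, hsw, rfl⟩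
  rintro r ⟨v, w, hv, hw, -, -, rfl⟩
  simpa [hv, hw] using norm_ip_mulVec_le_opNorm X w v

lemma Snorm_le_iff {X : Matrix (Fin m × Fin n) (Fin m × Fin n) ℂ} (hX : X.PosSemidef)
    (hne : ∃ v : Fin m × Fin n → ℂ, nrm v = 1 ∧ SRle k v) (c : ℝ) :
    Snorm k X ≤ c ↔ ∀ v, nrm v = 1 → SRle k v → (ip v (X *ᵥ v)).re ≤ c := by
  refine ⟨fun h v hv hs => ?_, fun h => ?_⟩
  · exact (Complex.re_le_norm _).trans ((norm_ip_mulVec_le_Snorm X hv hv hs hs).trans h)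
  · obtain ⟨v₀, hv₀, hs₀⟩ := hne
    refine csSup_le ⟨_, v₀, v₀, hv₀, hv₀, hs₀, hs₀, rfl⟩ ?_
    rintro r ⟨v, w, hv, hw, hsv, hsw, rfl⟩
    have hc : 0 ≤ c := (hX.re_ip_mulVec_nonneg v).trans (h v hv hsv)
    calc ‖ip w (X *ᵥ v)‖ ≤ √(ip w (X *ᵥ w)).re * √(ip v (X *ᵥ v)).re :=
          hX.norm_ip_mulVec_le w v
      _ ≤ √c * √c := by gcongr; exacts [h w hw hsw, h v hv hsv]
      _ = c := Real.mul_self_sqrt hc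

end SchmidtRank

/-- Let `X ∈ M_m ⊗ M_n` be positive semidefinite and `c ∈ ℝ`.  Then
`c·I − X` is `k`-block positive if and only if `c ≥ ‖X‖_{S(k)}`. -/
theorem cI_sub_X_kBlockPos_iff (m n k : ℕ) (hm : 0 < m) (hn : 0 < n) (hk : 1 ≤ k)
    (X : Matrix (Fin m × Fin n) (Fin m × Fin n) ℂ) (hX : X.PosSemidef) (c : ℝ) :
    kBlockPos k ((c : ℂ) • (1 : Matrix (Fin m × Fin n) (Fin m × Fin n) ℂ) - X) ↔
      Snorm k X ≤ c := by
  rw [kBlockPos_smul_one_sub_iff, Snorm_le_iff hX (exists_nrm_eq_one_SRle hm hn hk)]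
end
end
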